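/- arXiv:0911.4365 — 5 statements merged into one kernel-verified Lean document; each statement's English description precedes it below -/
import Mathlib

section
/- Let A : (0,∞) → (0,∞) be continuous, integrable in a neighborhood of zero but not integrable in a neighborhood of infinity. If Φ₁ and Φ₂ are both bounded continuous functions from [0,∞) to ℝ, twice differentiable on (0,∞), with Φ₁(0) = Φ₂(0) = 1 and Φᵢ''(t) = A(t)Φᵢ(t) for all t > 0 (i = 1,2), then Φ₁ = Φ₂. -/
open MeasureTheory Filter Set

/-- Hypotheses on the coefficient `A` of the Sturm–Liouville equation: continuous and
strictly positive on `(0,∞)`, integrable in a neighborhood of zero, but not integrable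
in a neighborhood of infinity. -/
def SLHyp (A : ℝ → ℝ) : Prop :=
  ContinuousOn A (Set.Ioi 0) ∧ (∀ t > (0:ℝ), 0 < A t) ∧
  MeasureTheory.IntegrableOn A (Set.Ioc 0 1) ∧
  (∫⁻ t in Set.Ici (1:ℝ), ENNReal.ofReal (A t)) = ⊤

/-- `Φ` is a bounded continuous function on `[0,∞)` with `Φ 0 = 1`, twice differentiable on
`(0,∞)` and satisfying the Sturm–Liouville equation `Φ'' = A Φ` there. -/
def IsSL (A Φ : ℝ → ℝ) : Prop :=
  ContinuousOn Φ (Set.Ici 0) ∧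
  (∃ M : ℝ, ∀ t ≥ (0:ℝ), |Φ t| ≤ M) ∧
  Φ 0 = 1 ∧
  (∀ t > (0:ℝ), DifferentiableAt ℝ Φ t) ∧
  (∀ t > (0:ℝ), HasDerivAt (deriv Φ) (A t * Φ t) t)

/-!
For the difference `ψ = Φ₁ - Φ₂` we have `ψ(0) = 0`, `ψ` bounded and `ψ'' = A ψ`, hence
`(ψ²)'' = 2ψ'² + 2Aψ² ≥ 0`: the function `ψ²` is convex and bounded on `[0,∞)` and vanishes
at `0`. Convexity gives `ψ²(z) ≥ (z / y) ψ²(y)` for `z ≥ y > 0`, so boundedness forces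
`ψ² = 0`.
-/

lemma ConvexOn.nonpos_of_bddAbove_of_map_zero {g : ℝ → ℝ} (hg : ConvexOn ℝ (Ici 0) g)
    (h0 : g 0 = 0) (hbdd : BddAbove (g '' Ici 0)) : ∀ y ≥ (0 : ℝ), g y ≤ 0 := by
  intro y hy
  by_contra! hgy
  obtain ⟨M, hM⟩ := hbdd
  have hy0 : 0 < y := lt_of_le_of_ne hy (by rintro rfl; exact hgy.ne' h0)
  have hMy : g y ≤ M := hM (mem_image_of_mem g hy)
  have hgrowth : ∀ z ≥ y, g y * z ≤ y * g z := by
    intro z hz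
    have hz0 : 0 < z := hy0.trans_le hz
    have hcomb := hg.2 (x := 0) (y := z) self_mem_Ici hz0.le
      (sub_nonneg.2 ((div_le_one hz0).2 hz)) (div_nonneg hy hz0.le) (sub_add_cancel 1 (y / z))
    simp only [zero_add, smul_eq_mul, h0, mul_zero, div_mul_cancel₀ y hz0.ne'] at hcomb
    rw [div_mul_eq_mul_div, le_div_iff₀ hz0] at hcomb
    linarith
  set z := y * (M / g y + 1)
  have hyz : y ≤ z := le_mul_of_one_le_right hy (by linarith [div_nonneg (hgy.le.trans hMy) hgy.le])
  have hgz : g z ≤ M := hM (mem_image_of_mem g (hy.trans hyz))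
  have hgyz : g y * z = y * (M + g y) := by
    simp only [z]; field_simp
  nlinarith [hgrowth z hyz]

lemma convexOn_sq_of_hasDerivAt_of_hasDerivAt_mul {D : Set ℝ} (hD : Convex ℝ D)
    {A ψ ψ' : ℝ → ℝ} (hA : ∀ t ∈ interior D, 0 ≤ A t) (hψc : ContinuousOn ψ D)
    (hψ : ∀ t ∈ interior D, HasDerivAt ψ (ψ' t) t)
    (hψ' : ∀ t ∈ interior D, HasDerivAt ψ' (A t * ψ t) t) :
    ConvexOn ℝ D (fun t => ψ t ^ 2) := by
  refine convexOn_of_hasDerivWithinAt2_nonneg hD (hψc.pow 2)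
    (f' := fun t => 2 * ψ t * ψ' t) (f'' := fun t => 2 * ψ' t ^ 2 + 2 * A t * ψ t ^ 2)
    (fun t ht => ?_) (fun t ht => ?_) (fun t ht => by have := hA t ht; positivity)
  · exact (((hψ t ht).fun_pow 2).congr_deriv (by ring)).hasDerivWithinAt
  · exact ((((hψ t ht).const_mul 2).fun_mul (hψ' t ht)).congr_deriv (by ring)).hasDerivWithinAt

theorem uniqueness_of_sturm_liouville_solution (A : ℝ → ℝ) (hA : SLHyp A)
    (Φ₁ Φ₂ : ℝ → ℝ) (h1 : IsSL A Φ₁) (h2 : IsSL A Φ₂) :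
    ∀ t ≥ (0:ℝ), Φ₁ t = Φ₂ t := by
  obtain ⟨hc₁, ⟨M₁, hM₁⟩, h0₁, hd₁, hdd₁⟩ := h1
  obtain ⟨hc₂, ⟨M₂, hM₂⟩, h0₂, hd₂, hdd₂⟩ := h2
  have hconv : ConvexOn ℝ (Ici 0) (fun t => (Φ₁ t - Φ₂ t) ^ 2) := by
    refine convexOn_sq_of_hasDerivAt_of_hasDerivAt_mul (convex_Ici 0) (A := A)
      (ψ' := fun t => deriv Φ₁ t - deriv Φ₂ t) ?_ (hc₁.sub hc₂) ?_ ?_ <;>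
      simp only [interior_Ici, mem_Ioi]
    · exact fun t ht => (hA.2.1 t ht).le
    · exact fun t ht => (hd₁ t ht).hasDerivAt.fun_sub (hd₂ t ht).hasDerivAt
    · exact fun t ht => ((hdd₁ t ht).fun_sub (hdd₂ t ht)).congr_deriv (mul_sub _ _ _).symm
  have hbdd : BddAbove ((fun t => (Φ₁ t - Φ₂ t) ^ 2) '' Ici 0) := by
    refine ⟨(M₁ + M₂) ^ 2, ?_⟩
    rintro _ ⟨t, ht, rfl⟩
    have hdiff : |Φ₁ t - Φ₂ t| ≤ M₁ + M₂ := (abs_sub _ _).trans (add_le_add (hM₁ t ht) (hM₂ t ht))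
    exact sq_le_sq' (abs_le.1 hdiff).1 (abs_le.1 hdiff).2
  intro t ht
  have hsq := hconv.nonpos_of_bddAbove_of_map_zero (by simp [h0₁, h0₂]) hbdd t ht
  exact sub_eq_zero.1 (pow_eq_zero_iff two_ne_zero |>.1 (le_antisymm hsq (sq_nonneg _)))
end

section
/- Let A₁, A₂ : (0,∞) → (0,∞) be continuous, integrable in a neighborhood of zero but not integrable in a neighborhood of infinity, and suppose A₁(t) ≥ A₂(t) for all t > 0. Then |Φ_{A₁}'(0)| ≥ |Φ_{A₂}'(0)|, where Φ_{Aᵢ}'(0) denotes the derivative at 0 of Φ_{Aᵢ}. -/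
open MeasureTheory Filter Set
open Topology

/-!
For `A ≥ 0` the product `Φ Φ'` is nondecreasing, its derivative being `Φ'² + A Φ²`. A bounded
function with nondecreasing derivative has derivative increasing to `0`; applied to `Φ² / 2`
this makes `|Φ|` nonincreasing, so `Φ` cannot change sign and `Φ ≥ 0`. Hence `Φ'' = A Φ ≥ 0`,
and applied to `Φ` itself the same fact shows that `Φ'` increases to `0`. Near `0`, `Φ'` is
bounded below because `A` is integrable there, so its limit at `0⁺` is the one-sided derivative
`Φ'(0) ≤ 0`. Finally the Wronskian `W = Φ₁' Φ₂ - Φ₁ Φ₂'` satisfies `W' = (A₁ - A₂) Φ₁ Φ₂ ≥ 0`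
and tends to `0` at infinity, so `W ≤ 0`; letting `t → 0⁺` gives `Φ₁'(0) ≤ Φ₂'(0) ≤ 0`.
-/

section DerivativeAtTop

variable {f f' : ℝ → ℝ} {a M : ℝ}

theorem monotoneOn_Ioi_of_hasDerivAt_nonneg (hf : ∀ t > a, HasDerivAt f (f' t) t)
    (hf' : ∀ t > a, 0 ≤ f' t) : MonotoneOn f (Ioi a) := by
  refine monotoneOn_of_hasDerivWithinAt_nonneg (f' := f') (convex_Ioi a)
    (fun t ht => (hf t ht).continuousAt.continuousWithinAt) ?_ ?_ <;> rw [interior_Ioi]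
  · exact fun t ht => (hf t ht).hasDerivWithinAt
  · exact hf'

theorem exists_lt_of_hasDerivAt_of_bddAbove (hf : ∀ t > a, HasDerivAt f (f' t) t)
    (hM : ∀ t > a, f t ≤ M) {c : ℝ} (hc : 0 < c) : ∃ t > a, f' t < c := by
  by_contra! hge
  have hmono : MonotoneOn (fun t => f t - c * t) (Ioi a) :=
    monotoneOn_Ioi_of_hasDerivAt_nonneg
      (fun t ht => (hf t ht).sub ((hasDerivAt_id' t).const_mul c))
      (fun t ht => by linarith [hge t ht])
  set t₁ := a + 1
  set t₂ := t₁ + (M - f t₁ + 1) / c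
  have ht₁ : a < t₁ := by linarith
  have hstep : 0 < (M - f t₁ + 1) / c := div_pos (by linarith [hM t₁ ht₁]) hc
  have hct₂ : c * t₂ = c * t₁ + (M - f t₁ + 1) := by
    rw [mul_add, mul_div_cancel₀ _ hc.ne']
  have := hmono ht₁ (show a < t₂ by linarith) (by linarith)
  linarith [hM t₂ (by linarith)]

theorem nonpos_of_hasDerivAt_of_monotoneOn (hf : ∀ t > a, HasDerivAt f (f' t) t)
    (hf' : MonotoneOn f' (Ioi a)) (hM : ∀ t > a, f t ≤ M) {t : ℝ} (ht : a < t) :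
    f' t ≤ 0 := by
  by_contra! hpos
  obtain ⟨u, hu, hlt⟩ := exists_lt_of_hasDerivAt_of_bddAbove
    (fun u hu => hf u (ht.trans hu)) (fun u hu => hM u (ht.trans hu)) hpos
  exact (hf' ht (ht.trans hu) hu.le).not_gt hlt

theorem tendsto_atTop_zero_of_hasDerivAt_of_monotoneOn (hf : ∀ t > a, HasDerivAt f (f' t) t)
    (hf' : MonotoneOn f' (Ioi a)) (hM : ∀ t > a, |f t| ≤ M) : Tendsto f' atTop (𝓝 0) := by
  refine tendsto_order.2 ⟨fun b hb => ?_, fun b hb => ?_⟩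
  · obtain ⟨T, hT, hbT⟩ := exists_lt_of_hasDerivAt_of_bddAbove (f := fun t => -f t)
      (fun t ht => (hf t ht).neg) (fun t ht => (neg_le_abs _).trans (hM t ht)) (neg_pos.2 hb)
    filter_upwards [eventually_ge_atTop T] with t ht
    exact (neg_lt_neg_iff.1 hbT).trans_le (hf' hT (hT.trans_le ht) ht)
  · filter_upwards [eventually_gt_atTop a] with t ht
    exact (nonpos_of_hasDerivAt_of_monotoneOn hf hf'
      (fun t ht => (le_abs_self _).trans (hM t ht)) ht).trans_lt hb

end DerivativeAtTop

theorem hasDerivAt_sq_div_two {Φ : ℝ → ℝ} {t : ℝ} (hΦ : DifferentiableAt ℝ Φ t) :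
    HasDerivAt (fun t => Φ t ^ 2 / 2) (Φ t * deriv Φ t) t :=
  ((hΦ.hasDerivAt.pow 2).div_const 2).congr_deriv (by ring)

namespace IsSL

variable {A Φ : ℝ → ℝ}

theorem mul_deriv_nonpos {M : ℝ} (hA : ∀ t > 0, 0 ≤ A t)
    (hΦ : ∀ t > 0, DifferentiableAt ℝ Φ t) (hΦ' : ∀ t > 0, HasDerivAt (deriv Φ) (A t * Φ t) t)
    (hM : ∀ t > 0, |Φ t| ≤ M) {t : ℝ} (ht : 0 < t) : Φ t * deriv Φ t ≤ 0 := by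
  refine nonpos_of_hasDerivAt_of_monotoneOn (M := M ^ 2 / 2)
    (fun t ht => hasDerivAt_sq_div_two (hΦ t ht)) ?_ (fun t ht => ?_) ht
  · refine monotoneOn_Ioi_of_hasDerivAt_nonneg (fun t ht => (hΦ t ht).hasDerivAt.mul (hΦ' t ht))
      (fun t ht => ?_)
    nlinarith [mul_nonneg (hA t ht) (sq_nonneg (Φ t)), sq_nonneg (deriv Φ t)]
  · have := pow_le_pow_left₀ (abs_nonneg (Φ t)) (hM t ht) 2
    rw [sq_abs] at this
    linarith

theorem nonneg (h : IsSL A Φ) (hA : ∀ t > 0, 0 ≤ A t) {t : ℝ} (ht : 0 ≤ t) : 0 ≤ Φ t := by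
  obtain ⟨hc, ⟨M, hM⟩, h0, hΦ, hΦ'⟩ := h
  have hanti : AntitoneOn (fun t => Φ t ^ 2 / 2) (Ici 0) := by
    refine antitoneOn_of_hasDerivWithinAt_nonpos (f' := fun t => Φ t * deriv Φ t) (convex_Ici 0)
      ((hc.pow 2).div_const 2) ?_ ?_
      <;> rw [interior_Ici]
    · exact fun t ht => (hasDerivAt_sq_div_two (hΦ t ht)).hasDerivWithinAt
    · exact fun t ht => mul_deriv_nonpos hA hΦ hΦ' (fun t ht => hM t ht.le) ht
  by_contra! hneg
  -- `Φ` vanishes somewhere in `[0, t]`, and `|Φ|` cannot grow again afterwards.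
  obtain ⟨z, hz, hz0⟩ := intermediate_value_Icc' ht (hc.mono Icc_subset_Ici_self)
    ⟨hneg.le, h0 ▸ zero_le_one⟩
  have := hanti hz.1 ht hz.2
  simp only [hz0] at this
  nlinarith

theorem monotoneOn_deriv (h : IsSL A Φ) (hA : ∀ t > 0, 0 ≤ A t) :
    MonotoneOn (deriv Φ) (Ioi 0) :=
  monotoneOn_Ioi_of_hasDerivAt_nonneg h.2.2.2.2
    (fun t ht => mul_nonneg (hA t ht) (h.nonneg hA ht.le))

theorem deriv_nonpos (h : IsSL A Φ) (hA : ∀ t > 0, 0 ≤ A t) {t : ℝ} (ht : 0 < t) :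
    deriv Φ t ≤ 0 := by
  obtain ⟨M, hM⟩ := h.2.1
  exact nonpos_of_hasDerivAt_of_monotoneOn (fun t ht => (h.2.2.2.1 t ht).hasDerivAt)
    (h.monotoneOn_deriv hA) (fun t ht => (le_abs_self _).trans (hM t ht.le)) ht

theorem tendsto_deriv_atTop (h : IsSL A Φ) (hA : ∀ t > 0, 0 ≤ A t) :
    Tendsto (deriv Φ) atTop (𝓝 0) := by
  obtain ⟨M, hM⟩ := h.2.1
  exact tendsto_atTop_zero_of_hasDerivAt_of_monotoneOn (fun t ht => (h.2.2.2.1 t ht).hasDerivAt)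
    (h.monotoneOn_deriv hA) (fun t ht => hM t ht.le)

theorem bddBelow_deriv (h : IsSL A Φ) (hA : ∀ t > 0, 0 ≤ A t) (hint : IntegrableOn A (Ioc 0 1)) :
    BddBelow (deriv Φ '' Ioi 0) := by
  have hAΦ : IntegrableOn (fun t => A t * Φ t) (Ioc 0 1) :=
    hint.mul_continuousOn_of_subset (h.1.mono Icc_subset_Ici_self) measurableSet_Ioc
      isCompact_Icc Ioc_subset_Icc_self
  have hAΦ_nonneg : ∀ t ∈ Ioc (0 : ℝ) 1, 0 ≤ A t * Φ t :=
    fun t ht => mul_nonneg (hA t ht.1) (h.nonneg hA ht.1.le)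
  refine ⟨deriv Φ 1 - ∫ t in Ioc 0 1, A t * Φ t, ?_⟩
  rintro _ ⟨t, ht, rfl⟩
  rcases le_or_gt t 1 with ht1 | ht1
  · have hftc : ∫ u in Ioc t 1, A u * Φ u = deriv Φ 1 - deriv Φ t := by
      rw [← intervalIntegral.integral_of_le ht1]
      refine intervalIntegral.integral_eq_sub_of_hasDerivAt
        (fun u hu => h.2.2.2.2 u (ht.trans_le (uIcc_of_le ht1 ▸ hu).1)) ?_
      exact (intervalIntegrable_iff_integrableOn_Ioc_of_le ht1).2
        (hAΦ.mono_set (Ioc_subset_Ioc_left (le_of_lt ht)))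
    have := setIntegral_mono_set hAΦ (ae_restrict_of_forall_mem measurableSet_Ioc hAΦ_nonneg)
      (Ioc_subset_Ioc_left (le_of_lt ht)).eventuallyLE
    linarith
  · have := setIntegral_nonneg (μ := volume) measurableSet_Ioc hAΦ_nonneg
    linarith [h.monotoneOn_deriv hA (mem_Ioi.2 one_pos) ht ht1.le]

theorem tendsto_deriv_nhdsGT_zero (h : IsSL A Φ) (hA : ∀ t > 0, 0 ≤ A t)
    (hint : IntegrableOn A (Ioc 0 1)) :
    Tendsto (deriv Φ) (𝓝[>] 0) (𝓝 (derivWithin Φ (Ici 0) 0)) := by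
  have hlim := (h.monotoneOn_deriv hA).tendsto_nhdsGT (h.bddBelow_deriv hA hint)
  have hderiv := hasDerivWithinAt_Ici_of_tendsto_deriv
    (fun t ht => (h.2.2.2.1 t ht).differentiableWithinAt)
    ((h.1 0 self_mem_Ici).mono Ioi_subset_Ici_self) self_mem_nhdsWithin hlim
  rwa [hderiv.derivWithin (uniqueDiffOn_Ici 0 0 self_mem_Ici)]

theorem wronskian_nonpos {A₁ A₂ Φ₁ Φ₂ : ℝ → ℝ} (h₁ : IsSL A₁ Φ₁) (h₂ : IsSL A₂ Φ₂)
    (hA₂ : ∀ t > 0, 0 ≤ A₂ t) (hle : ∀ t > 0, A₂ t ≤ A₁ t) {t : ℝ} (ht : 0 < t) :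
    deriv Φ₁ t * Φ₂ t - Φ₁ t * deriv Φ₂ t ≤ 0 := by
  have hA₁ : ∀ t > 0, 0 ≤ A₁ t := fun t ht => (hA₂ t ht).trans (hle t ht)
  have hmono : MonotoneOn (fun t => deriv Φ₁ t * Φ₂ t - Φ₁ t * deriv Φ₂ t) (Ioi 0) := by
    refine monotoneOn_Ioi_of_hasDerivAt_nonneg (fun t ht =>
      ((h₁.2.2.2.2 t ht).mul (h₂.2.2.2.1 t ht).hasDerivAt).sub
        ((h₁.2.2.2.1 t ht).hasDerivAt.mul (h₂.2.2.2.2 t ht))) (fun t ht => ?_)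
    exact (mul_nonneg (sub_nonneg.2 (hle t ht))
      (mul_nonneg (h₁.nonneg hA₁ ht.le) (h₂.nonneg hA₂ ht.le))).trans_eq (by ring)
  have hbdd : ∀ {A Φ : ℝ → ℝ}, IsSL A Φ → IsBoundedUnder (· ≤ ·) atTop (norm ∘ Φ) :=
    fun ⟨_, ⟨M, hM⟩, _⟩ => isBoundedUnder_of_eventually_le (a := M)
      (eventually_ge_atTop 0 |>.mono fun t ht => hM t ht)
  have hlim : Tendsto (fun t => deriv Φ₁ t * Φ₂ t - Φ₁ t * deriv Φ₂ t) atTop (𝓝 0) := by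
    simpa using ((h₁.tendsto_deriv_atTop hA₁).zero_mul_isBoundedUnder_le (hbdd h₂)).sub
      (isBoundedUnder_le_mul_tendsto_zero (hbdd h₁) (h₂.tendsto_deriv_atTop hA₂))
  refine ge_of_tendsto hlim ?_
  filter_upwards [eventually_ge_atTop t] with u hu
  exact hmono ht (ht.trans_le hu) hu

end IsSL

theorem derivative_at_zero_monotone_in_coefficient
    (A₁ A₂ Φ₁ Φ₂ : ℝ → ℝ) (hA₁ : SLHyp A₁) (hA₂ : SLHyp A₂)
    (hle : ∀ t > (0:ℝ), A₂ t ≤ A₁ t)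
    (h1 : IsSL A₁ Φ₁) (h2 : IsSL A₂ Φ₂) :
    |derivWithin Φ₂ (Set.Ici 0) 0| ≤ |derivWithin Φ₁ (Set.Ici 0) 0| := by
  have hA₁_nonneg : ∀ t > (0:ℝ), 0 ≤ A₁ t := fun t ht => (hA₁.2.1 t ht).le
  have hA₂_nonneg : ∀ t > (0:ℝ), 0 ≤ A₂ t := fun t ht => (hA₂.2.1 t ht).le
  have hd₁ := h1.tendsto_deriv_nhdsGT_zero hA₁_nonneg hA₁.2.2.1
  have hd₂ := h2.tendsto_deriv_nhdsGT_zero hA₂_nonneg hA₂.2.2.1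
  have hΦ₁ : Tendsto Φ₁ (𝓝[>] 0) (𝓝 1) :=
    h1.2.2.1 ▸ ((h1.1 0 self_mem_Ici).mono Ioi_subset_Ici_self).tendsto
  have hΦ₂ : Tendsto Φ₂ (𝓝[>] 0) (𝓝 1) :=
    h2.2.2.1 ▸ ((h2.1 0 self_mem_Ici).mono Ioi_subset_Ici_self).tendsto
  have hd₂_nonpos : derivWithin Φ₂ (Ici 0) 0 ≤ 0 :=
    le_of_tendsto hd₂ (eventually_nhdsWithin_of_forall fun t ht => h2.deriv_nonpos hA₂_nonneg ht)
  have hW : derivWithin Φ₁ (Ici 0) 0 * 1 - 1 * derivWithin Φ₂ (Ici 0) 0 ≤ 0 :=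
    le_of_tendsto ((hd₁.mul hΦ₂).sub (hΦ₁.mul hd₂)) (eventually_nhdsWithin_of_forall
      fun t ht => h1.wronskian_nonpos h2 hA₂_nonneg hle ht)
  rw [abs_of_nonpos hd₂_nonpos, abs_of_nonpos (by linarith)]
  linarith
end

section
/- Let A : (0,∞) → (0,∞) be continuous with ∫_0^1 A(t) dt < ∞, and let Θ : (0,1] → ℝ be twice differentiable with Θ''(t) = A(t)Θ(t), Θ(t) > 0 and Θ'(t) < 0 for all t ∈ (0,1]. Set L := 1 + Θ(1)/|Θ'(1)|. Then: (i) Θ(t) ≤ Θ(1) + |Θ'(t)| and Θ(t) ≤ L|Θ'(t)| for all t ∈ (0,1]; (ii) |log|Θ'(t)| − log|Θ'(s)|| ≤ L ∫_t^s A(u) du for all 0 < t ≤ s ≤ 1, so Θ' is bounded on (0,1]; (iii) the limits Θ(0+) := lim_{t→0+} Θ(t) and Θ'(0+) := lim_{t→0+} Θ'(t) exist and are finite, and the extension of Θ to [0,1] obtained by setting Θ(0) := Θ(0+) is differentiable at 0 with derivative Θ'(0+). -/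
/-!
Since `Θ'' = AΘ > 0`, the derivative `Θ'` increases, so `Θ` is convex and decreasing. The tangent
line at `t` lies below `Θ`, which gives `Θ t ≤ Θ 1 + |Θ' t|`, and `|Θ' 1| ≤ |Θ' t|` turns this into
`Θ t ≤ L |Θ' t|`. Hence `(log |Θ'|)' = AΘ/Θ'` lies between `-L A` and `0`, and integrating gives
the logarithmic estimate; since `A` is integrable at `0`, `log |Θ'|` and thus `Θ'` stay bounded.
Bounded monotone functions have one-sided limits, and a function whose derivative has a limit at
an endpoint is differentiable there with that limit as derivative.
-/

open MeasureTheory Filter Set Topology Real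

variable {f f' : ℝ → ℝ}

lemma monotoneOn_of_forall_hasDerivWithinAt_nonneg {D : Set ℝ} (hD : Convex ℝ D)
    (hf : ∀ x ∈ D, HasDerivWithinAt f (f' x) D x) (hf' : ∀ x ∈ interior D, 0 ≤ f' x) :
    MonotoneOn f D :=
  monotoneOn_of_hasDerivWithinAt_nonneg hD (fun x hx => (hf x hx).continuousWithinAt)
    (fun x hx => (hf x (interior_subset hx)).mono interior_subset) hf'

lemma antitoneOn_of_forall_hasDerivWithinAt_nonpos {D : Set ℝ} (hD : Convex ℝ D)
    (hf : ∀ x ∈ D, HasDerivWithinAt f (f' x) D x) (hf' : ∀ x ∈ interior D, f' x ≤ 0) :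
    AntitoneOn f D :=
  antitoneOn_of_hasDerivWithinAt_nonpos hD (fun x hx => (hf x hx).continuousWithinAt)
    (fun x hx => (hf x (interior_subset hx)).mono interior_subset) hf'

lemma mul_sub_le_sub_of_monotoneOn_deriv {D : Set ℝ} (hD : Convex ℝ D)
    (hf : ∀ x ∈ D, HasDerivWithinAt f (f' x) D x) (hf' : MonotoneOn f' D)
    {x y : ℝ} (hx : x ∈ D) (hy : y ∈ D) (hxy : x ≤ y) :
    f' x * (y - x) ≤ f y - f x := by
  have hmono : MonotoneOn (fun u => f u - f' x * u) (D ∩ Ici x) := by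
    refine monotoneOn_of_forall_hasDerivWithinAt_nonneg (f' := fun u => f' u - f' x)
      (hD.inter (convex_Ici x))
      (fun u hu => (((hf u hu.1).mono inter_subset_left).sub
        ((hasDerivWithinAt_id u _).const_mul (f' x))).congr_deriv (by ring))
      fun u hu => ?_
    have hu := interior_subset hu
    exact sub_nonneg.2 (hf' hx hu.1 hu.2)
  have := hmono ⟨hx, mem_Ici.2 le_rfl⟩ ⟨hy, hxy⟩ hxy
  simp only at this
  linarith

lemma log_sub_log_le_integral {g g' φ : ℝ → ℝ} {a b : ℝ} (hab : a ≤ b)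
    (hg : ∀ x ∈ Icc a b, HasDerivWithinAt g (g' x) (Icc a b) x) (hpos : ∀ x ∈ Icc a b, 0 < g x)
    (hφ : IntegrableOn φ (Icc a b)) (hle : ∀ x ∈ Ioo a b, -g' x ≤ φ x * g x) :
    log (g a) - log (g b) ≤ ∫ x in a..b, φ x := by
  have hcont : ContinuousOn (fun x => -log (g x)) (Icc a b) :=
    (ContinuousOn.log (fun x hx => (hg x hx).continuousWithinAt)
      fun x hx => (hpos x hx).ne').neg
  have hderiv : ∀ x ∈ Ioo a b, HasDerivWithinAt (fun x => -log (g x)) (-(g' x / g x)) (Ioi x) x :=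
    fun x hx => (((hg x (Ioo_subset_Icc_self hx)).hasDerivAt (Icc_mem_nhds hx.1 hx.2)).log
      (hpos x (Ioo_subset_Icc_self hx)).ne').neg.hasDerivWithinAt
  have := intervalIntegral.sub_le_integral_of_hasDeriv_right_of_le hab hcont hderiv hφ
    fun x hx => by
      rw [neg_le, le_div_iff₀ (hpos x (Ioo_subset_Icc_self hx))]
      linarith [hle x hx]
  linarith

lemma hasDerivWithinAt_Icc_ite_of_tendsto {a b l l' : ℝ} (hab : a < b)
    (hf : ∀ x ∈ Ioo a b, HasDerivAt f (f' x) x) (hl : Tendsto f (𝓝[>] a) (𝓝 l))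
    (hl' : Tendsto f' (𝓝[>] a) (𝓝 l')) :
    HasDerivWithinAt (fun t => if t = a then l else f t) l' (Icc a b) a := by
  set g := fun t => if t = a then l else f t
  have hgf : ∀ x ∈ Ioi a, g x = f x := fun x hx => if_neg (ne_of_gt hx)
  have hg : ∀ x ∈ Ioo a b, HasDerivAt g (f' x) x := fun x hx =>
    (hf x hx).congr_of_eventuallyEq (eventually_of_mem (Ioi_mem_nhds hx.1) hgf)
  have hcont : ContinuousWithinAt g (Ioo a b) a := by
    simp only [ContinuousWithinAt, g, if_pos rfl]
    exact (hl.mono_left (nhdsWithin_mono _ Ioo_subset_Ioi_self)).congr'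
      (eventually_nhdsWithin_of_forall fun x hx => (hgf x hx.1).symm)
  refine (hasDerivWithinAt_Ici_of_tendsto_deriv (fun x hx => (hg x hx).differentiableAt
    |>.differentiableWithinAt) hcont (Ioo_mem_nhdsGT hab) ?_).mono Icc_subset_Ici_self
  exact hl'.congr' (eventually_of_mem (Ioo_mem_nhdsGT hab) fun x hx => (hg x hx).deriv.symm)

lemma exists_tendsto_nhdsGT_of_monotoneOn {a b m : ℝ} (hab : a < b)
    (hf : MonotoneOn f (Ioo a b)) (hm : ∀ x ∈ Ioo a b, m ≤ f x) :
    ∃ l, Tendsto f (𝓝[>] a) (𝓝 l) :=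
  ⟨_, hf.tendsto_nhdsWithin_Ioo_right (nonempty_Ioo.2 hab) ⟨m, forall_mem_image.2 hm⟩⟩

lemma exists_tendsto_nhdsGT_of_antitoneOn {a b m : ℝ} (hab : a < b)
    (hf : AntitoneOn f (Ioo a b)) (hm : ∀ x ∈ Ioo a b, f x ≤ m) :
    ∃ l, Tendsto f (𝓝[>] a) (𝓝 l) :=
  ⟨_, hf.tendsto_nhdsWithin_Ioo_right (nonempty_Ioo.2 hab) ⟨m, forall_mem_image.2 hm⟩⟩

lemma le_one_add_div_mul_of_le_add {x c y y₁ : ℝ} (hx : x ≤ c + y) (hc : 0 ≤ c) (hy₁ : 0 < y₁)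
    (hy : y₁ ≤ y) : x ≤ (1 + c / y₁) * y :=
  calc x ≤ c / y₁ * y₁ + y := by rwa [div_mul_cancel₀ c hy₁.ne']
    _ ≤ c / y₁ * y + y := by gcongr
    _ = (1 + c / y₁) * y := by ring

lemma le_add_abs_deriv_of_monotoneOn
    (hf : ∀ x ∈ Ioc (0:ℝ) 1, HasDerivWithinAt f (f' x) (Ioc 0 1) x)
    (hf' : MonotoneOn f' (Ioc 0 1)) {t : ℝ} (ht : t ∈ Ioc (0:ℝ) 1) (hneg : f' t ≤ 0) :
    f t ≤ f 1 + |f' t| := by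
  have := mul_sub_le_sub_of_monotoneOn_deriv (convex_Ioc 0 1) hf hf' ht
    (right_mem_Ioc.2 one_pos) ht.2
  rw [abs_of_nonpos hneg]
  nlinarith [ht.1]

lemma abs_le_abs_of_monotoneOn_of_neg {s : Set ℝ} (hf : MonotoneOn f s)
    (hneg : ∀ x ∈ s, f x < 0) {x y : ℝ} (hx : x ∈ s) (hy : y ∈ s) (hxy : x ≤ y) :
    |f y| ≤ |f x| := by
  rw [abs_of_neg (hneg x hx), abs_of_neg (hneg y hy)]
  exact neg_le_neg (hf hx hy hxy)

lemma abs_log_abs_sub_log_abs_le_integral {A Θ Θ' : ℝ → ℝ} {L t s : ℝ}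
    (hAc : ContinuousOn A (Ioi 0)) (hApos : ∀ t > (0:ℝ), 0 < A t)
    (hΘ' : ∀ x ∈ Ioc (0:ℝ) 1, HasDerivWithinAt Θ' (A x * Θ x) (Ioc 0 1) x)
    (hneg : ∀ x ∈ Ioc (0:ℝ) 1, Θ' x < 0) (hmono : MonotoneOn Θ' (Ioc 0 1))
    (hΘL : ∀ x ∈ Ioc (0:ℝ) 1, Θ x ≤ L * |Θ' x|) (ht : 0 < t) (hts : t ≤ s) (hs : s ≤ 1) :
    abs (log |Θ' t| - log |Θ' s|) ≤ L * ∫ u in t..s, A u := by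
  have hsub : Icc t s ⊆ Ioc 0 1 := Icc_subset_Ioc ht hs
  have ht' := hsub (left_mem_Icc.2 hts)
  have hs' := hsub (right_mem_Icc.2 hts)
  rw [abs_of_nonneg (sub_nonneg.2 (log_le_log (abs_pos.2 (hneg s hs').ne)
    (abs_le_abs_of_monotoneOn_of_neg hmono hneg ht' hs' hts))),
    abs_of_neg (hneg t ht'), abs_of_neg (hneg s hs'), ← intervalIntegral.integral_const_mul]
  have hint : IntegrableOn (fun u => L * A u) (Icc t s) :=
    ((hAc.mono fun x hx => ht.trans_le hx.1).const_smul L).integrableOn_Icc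
  refine log_sub_log_le_integral (g := fun u => -Θ' u) hts
    (fun x hx => ((hΘ' x (hsub hx)).mono hsub).neg) (fun x hx => neg_pos.2 (hneg x (hsub hx)))
    hint fun x hx => ?_
  have hx := hsub (Ioo_subset_Icc_self hx)
  have := mul_le_mul_of_nonneg_left (hΘL x hx) (hApos x hx.1).le
  rw [abs_of_neg (hneg x hx)] at this
  linarith

lemma abs_le_mul_exp_of_log_abs_sub_le {g A : ℝ → ℝ} {L : ℝ} (hL : 0 ≤ L)
    (hA : IntegrableOn A (Ioc 0 1)) (hA₀ : ∀ t ∈ Ioc (0:ℝ) 1, 0 ≤ A t)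
    (hg : ∀ t ∈ Ioc (0:ℝ) 1, g t ≠ 0)
    (hlog : ∀ t ∈ Ioc (0:ℝ) 1, log |g t| - log |g 1| ≤ L * ∫ u in t..1, A u)
    {t : ℝ} (ht : t ∈ Ioc (0:ℝ) 1) :
    |g t| ≤ |g 1| * exp (L * ∫ u in Ioc 0 1, A u) := by
  have hI : ∫ u in t..1, A u ≤ ∫ u in Ioc 0 1, A u := by
    rw [intervalIntegral.integral_of_le ht.2]
    exact setIntegral_mono_set hA ((ae_restrict_iff' measurableSet_Ioc).2 (ae_of_all _ hA₀))
      (Ioc_subset_Ioc_left ht.1.le).eventuallyLE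
  have hg₁ := abs_pos.2 (hg 1 (right_mem_Ioc.2 one_pos))
  have hlog_le : log |g t| ≤ log |g 1| + L * ∫ u in Ioc 0 1, A u := by
    linarith [hlog t ht, mul_le_mul_of_nonneg_left hI hL]
  calc |g t| ≤ exp (log |g 1| + L * ∫ u in Ioc 0 1, A u) :=
        (log_le_iff_le_exp (abs_pos.2 (hg t ht))).1 hlog_le
    _ = |g 1| * exp (L * ∫ u in Ioc 0 1, A u) := by rw [exp_add, exp_log hg₁]

theorem estimates_near_zero_for_decreasing_solution
    (A : ℝ → ℝ) (hAc : ContinuousOn A (Set.Ioi 0)) (hApos : ∀ t > (0:ℝ), 0 < A t)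
    (hAint : MeasureTheory.IntegrableOn A (Set.Ioc 0 1))
    (Θ Θ' : ℝ → ℝ)
    (hode : ∀ t ∈ Set.Ioc (0:ℝ) 1,
      HasDerivWithinAt Θ (Θ' t) (Set.Ioc 0 1) t ∧
      HasDerivWithinAt Θ' (A t * Θ t) (Set.Ioc 0 1) t)
    (hpos : ∀ t ∈ Set.Ioc (0:ℝ) 1, 0 < Θ t)
    (hneg : ∀ t ∈ Set.Ioc (0:ℝ) 1, Θ' t < 0)
    (L : ℝ) (hL : L = 1 + Θ 1 / |Θ' 1|) :
    (∀ t ∈ Set.Ioc (0:ℝ) 1, Θ t ≤ Θ 1 + |Θ' t| ∧ Θ t ≤ L * |Θ' t|) ∧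
    (∀ t s : ℝ, 0 < t → t ≤ s → s ≤ 1 →
      abs (Real.log |Θ' t| - Real.log |Θ' s|) ≤ L * ∫ u in t..s, A u) ∧
    (∃ M : ℝ, ∀ t ∈ Set.Ioc (0:ℝ) 1, |Θ' t| ≤ M) ∧
    (∃ l l' : ℝ,
      Filter.Tendsto Θ (nhdsWithin 0 (Set.Ioi 0)) (nhds l) ∧
      Filter.Tendsto Θ' (nhdsWithin 0 (Set.Ioi 0)) (nhds l') ∧
      HasDerivWithinAt (fun t => if t = 0 then l else Θ t) l' (Set.Icc 0 1) 0) := by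
  have hΘ := fun t ht => (hode t ht).1
  have hΘ' := fun t ht => (hode t ht).2
  have one_mem : (1:ℝ) ∈ Ioc (0:ℝ) 1 := right_mem_Ioc.2 one_pos
  have hmono : MonotoneOn Θ' (Ioc 0 1) :=
    monotoneOn_of_forall_hasDerivWithinAt_nonneg (convex_Ioc 0 1) hΘ' fun x hx =>
      (mul_pos (hApos x (interior_subset hx).1) (hpos x (interior_subset hx))).le
  have hanti : AntitoneOn Θ (Ioc 0 1) :=
    antitoneOn_of_forall_hasDerivWithinAt_nonpos (convex_Ioc 0 1) hΘ fun x hx =>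
      (hneg x (interior_subset hx)).le
  have hΘ₁ : ∀ t ∈ Ioc (0:ℝ) 1, Θ t ≤ Θ 1 + |Θ' t| :=
    fun t ht => le_add_abs_deriv_of_monotoneOn hΘ hmono ht (hneg t ht).le
  have hΘL : ∀ t ∈ Ioc (0:ℝ) 1, Θ t ≤ L * |Θ' t| := fun t ht => hL ▸
    le_one_add_div_mul_of_le_add (hΘ₁ t ht) (hpos 1 one_mem).le (abs_pos.2 (hneg 1 one_mem).ne)
      (abs_le_abs_of_monotoneOn_of_neg hmono hneg ht one_mem ht.2)
  have hlog := fun t s (ht : 0 < t) (hts : t ≤ s) (hs : s ≤ 1) =>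
    abs_log_abs_sub_log_abs_le_integral hAc hApos hΘ' hneg hmono hΘL ht hts hs
  have hL₀ : 0 ≤ L := hL ▸ add_nonneg zero_le_one (div_nonneg (hpos 1 one_mem).le (abs_nonneg _))
  have hM := fun t (ht : t ∈ Ioc (0:ℝ) 1) => abs_le_mul_exp_of_log_abs_sub_le hL₀ hAint
    (fun t ht => (hApos t ht.1).le) (fun t ht => (hneg t ht).ne)
    (fun t ht => (le_abs_self _).trans (hlog t 1 ht.1 ht.2 le_rfl)) ht
  obtain ⟨l', hl'⟩ := exists_tendsto_nhdsGT_of_monotoneOn one_pos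
    (hmono.mono Ioo_subset_Ioc_self) fun x hx => (abs_le.1 (hM x (Ioo_subset_Ioc_self hx))).1
  obtain ⟨l, hl⟩ := exists_tendsto_nhdsGT_of_antitoneOn one_pos
    (hanti.mono Ioo_subset_Ioc_self) fun x hx =>
      (hΘ₁ x (Ioo_subset_Ioc_self hx)).trans (add_le_add le_rfl (hM x (Ioo_subset_Ioc_self hx)))
  exact ⟨fun t ht => ⟨hΘ₁ t ht, hΘL t ht⟩, hlog, ⟨_, hM⟩, l, l', hl, hl',
    hasDerivWithinAt_Icc_ite_of_tendsto one_pos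
      (fun x hx => (hΘ x (Ioo_subset_Ioc_self hx)).hasDerivAt (Ioc_mem_nhds hx.1 hx.2)) hl hl'⟩
end

section
/- Let c > 0, β > −1, and define A₀(t) := c t^β for t > 0 (A₀ is continuous, positive, integrable near 0 and not integrable near ∞). Then for every λ > 0 and every t ≥ 0 one has Φ_{λA₀}(t) = Φ_{A₀}(λ^{1/(β+2)} t). -/
/-!
Uniqueness: the difference `u` of two bounded solutions vanishes at `0` and is convex wherever it
is positive, since `u'' = A u ≥ 0` there. A convex function bounded above on a half-line is
nonincreasing, so `u` can never become positive; by symmetry the two solutions agree.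

Scaling: `t ↦ Φ (μ t)` solves the equation with coefficient `μ² A(μ t)`, which for
`A = c t^β` equals `μ^(β+2) A(t)`, that is `λ A(t)` when `μ = λ^(1/(β+2))`.
-/

open MeasureTheory Filter Set

theorem ConvexOn.antitoneOn_Ici_of_forall_le {f : ℝ → ℝ} {a M : ℝ} (hf : ConvexOn ℝ (Ici a) f)
    (hM : ∀ x ≥ a, f x ≤ M) : AntitoneOn f (Ici a) := by
  intro x hx y hy hxy
  by_contra! hlt
  have hxy' : x < y := hxy.lt_of_ne (by rintro rfl; exact hlt.false)
  -- beyond `y`, `f` grows at least with the positive slope `k` of the secant over `[x, y]`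
  set k := (f y - f x) / (y - x)
  have hk : 0 < k := div_pos (sub_pos.2 hlt) (sub_pos.2 hxy')
  set T := y + (M - f x) / k + 1
  have hMx : 0 ≤ (M - f x) / k := div_nonneg (by linarith [hM y hy]) hk.le
  have hyT : y < T := by linarith
  have hT : a ≤ T := hy.trans hyT.le
  have hsec : k * (T - x) ≤ f T - f x :=
    (le_div_iff₀ (by linarith)).1 (hf.secant_mono_aux2 hx hT hxy' hyT)
  have hkT : M - f x < k * (T - x) :=
    calc M - f x = k * ((M - f x) / k) := (mul_div_cancel₀ _ hk.ne').symm
      _ < k * (T - x) := by gcongr; linarith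
  linarith [hM T hT]

theorem ContinuousOn.exists_nonpos_forall_pos_Ioc {u : ℝ → ℝ} {a b : ℝ} (hab : a ≤ b)
    (hu : ContinuousOn u (Icc a b)) (ha : u a ≤ 0) :
    ∃ c ∈ Icc a b, u c ≤ 0 ∧ ∀ x ∈ Ioc c b, 0 < u x := by
  have hK : IsCompact (Icc a b ∩ u ⁻¹' Iic 0) :=
    isCompact_Icc.of_isClosed_subset
      (hu.preimage_isClosed_of_isClosed isClosed_Icc isClosed_Iic) inter_subset_left
  obtain ⟨c, ⟨hc, huc⟩, hgreat⟩ := hK.exists_isGreatest ⟨a, ⟨left_mem_Icc.2 hab, ha⟩⟩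
  refine ⟨c, hc, huc, fun x hx => ?_⟩
  by_contra! hux
  exact (hgreat ⟨⟨hc.1.trans hx.1.le, hx.2⟩, hux⟩).not_gt hx.1

theorem ContinuousOn.exists_nonpos_forall_pos_Ico {u : ℝ → ℝ} {a b : ℝ} (hab : a ≤ b)
    (hu : ContinuousOn u (Icc a b)) (hb : u b ≤ 0) :
    ∃ c ∈ Icc a b, u c ≤ 0 ∧ ∀ x ∈ Ico a c, 0 < u x := by
  have hK : IsCompact (Icc a b ∩ u ⁻¹' Iic 0) :=
    isCompact_Icc.of_isClosed_subset
      (hu.preimage_isClosed_of_isClosed isClosed_Icc isClosed_Iic) inter_subset_left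
  obtain ⟨c, ⟨hc, huc⟩, hleast⟩ := hK.exists_isLeast ⟨b, ⟨right_mem_Icc.2 hab, hb⟩⟩
  refine ⟨c, hc, huc, fun x hx => ?_⟩
  by_contra! hux
  exact (hleast ⟨⟨hx.1, hx.2.le.trans hc.2⟩, hux⟩).not_gt hx.2

section

variable {A u Φ Φ₁ Φ₂ : ℝ → ℝ}

theorem convexOn_of_hasDerivAt_deriv (hA : ∀ t > (0:ℝ), 0 ≤ A t)
    (hd : ∀ t > (0:ℝ), DifferentiableAt ℝ u t)
    (hd2 : ∀ t > (0:ℝ), HasDerivAt (deriv u) (A t * u t) t)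
    ⦃s : Set ℝ⦄ (hs : Convex ℝ s) (hs0 : s ⊆ Ici 0) (hc : ContinuousOn u s)
    (hu : ∀ x ∈ interior s, 0 ≤ u x) : ConvexOn ℝ s u := by
  have hpos : interior s ⊆ Ioi 0 := (interior_mono hs0).trans interior_Ici.subset
  refine MonotoneOn.convexOn_of_deriv hs hc
    (fun x hx => (hd x (hpos hx)).differentiableWithinAt) ?_
  refine monotoneOn_of_deriv_nonneg hs.interior
    (fun x hx => (hd2 x (hpos hx)).continuousAt.continuousWithinAt)
    (fun x hx => (hd2 x (hpos (interior_subset hx))).differentiableAt.differentiableWithinAt)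
    (fun x hx => ?_)
  have hx' := interior_subset hx
  rw [(hd2 x (hpos hx')).deriv]
  exact mul_nonneg (hA x (hpos hx')) (hu x hx')

/-- If `u t₀ > 0`, let `a ≤ t₀` be the last point with `u a ≤ 0`. Convexity on `[a, b]` rules out
a later point `b` with `u b ≤ 0`, so `u` is convex and bounded on `[a, ∞)`, hence nonincreasing
there, and `u t₀ ≤ u a ≤ 0`. -/
theorem nonpos_of_hasDerivAt_deriv_of_bounded (hA : ∀ t > (0:ℝ), 0 ≤ A t)
    (hc : ContinuousOn u (Ici 0)) {M : ℝ} (hM : ∀ t ≥ (0:ℝ), |u t| ≤ M) (h0 : u 0 = 0)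
    (hd : ∀ t > (0:ℝ), DifferentiableAt ℝ u t)
    (hd2 : ∀ t > (0:ℝ), HasDerivAt (deriv u) (A t * u t) t) :
    ∀ t ≥ (0:ℝ), u t ≤ 0 := by
  intro t₀ ht₀
  by_contra! hut₀
  have hconvex := convexOn_of_hasDerivAt_deriv hA hd hd2
  obtain ⟨a, ⟨ha0, hat₀⟩, hua, hpos_before⟩ :=
    (hc.mono Icc_subset_Ici_self).exists_nonpos_forall_pos_Ioc ht₀ h0.le
  have hIci : Ici a ⊆ Ici 0 := Ici_subset_Ici.2 ha0
  have hpos_after : ∀ t ≥ t₀, 0 < u t := by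
    intro t ht
    by_contra! hut
    obtain ⟨b, ⟨ht₀b, -⟩, hub, hpos_b⟩ :=
      (hc.mono (Icc_subset_Ici_self.trans (Ici_subset_Ici.2 ht₀))).exists_nonpos_forall_pos_Ico
        ht hut
    have hab : Icc a b ⊆ Ici 0 := Icc_subset_Ici_self.trans hIci
    have hconv_ab : ConvexOn ℝ (Icc a b) u := by
      refine hconvex (convex_Icc a b) hab (hc.mono hab) fun x hx => ?_
      rw [interior_Icc] at hx
      rcases le_total x t₀ with hx' | hx'
      · exact (hpos_before x ⟨hx.1, hx'⟩).le
      · exact (hpos_b x ⟨hx', hx.2⟩).le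
    have hab' : a ≤ b := hat₀.trans ht₀b
    have hle := hconv_ab.le_on_segment (left_mem_Icc.2 hab') (right_mem_Icc.2 hab')
      (by rw [segment_eq_Icc hab']; exact ⟨hat₀, ht₀b⟩)
    exact hut₀.not_ge (hle.trans (max_le hua hub))
  have hconv_a : ConvexOn ℝ (Ici a) u := by
    refine hconvex (convex_Ici a) hIci (hc.mono hIci) fun x hx => ?_
    rw [interior_Ici] at hx
    rcases le_total x t₀ with hx' | hx'
    · exact (hpos_before x ⟨hx, hx'⟩).le
    · exact (hpos_after x hx').le
  have hanti := hconv_a.antitoneOn_Ici_of_forall_le fun x hx =>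
    (le_abs_self _).trans (hM x (ha0.trans hx))
  exact hut₀.not_ge ((hanti self_mem_Ici hat₀ hat₀).trans hua)


theorem IsSL.le (hA : ∀ t > (0:ℝ), 0 ≤ A t) (h₁ : IsSL A Φ₁) (h₂ : IsSL A Φ₂) :
    ∀ t ≥ (0:ℝ), Φ₁ t ≤ Φ₂ t := by
  obtain ⟨hc₁, ⟨M₁, hM₁⟩, h0₁, hd₁, hdd₁⟩ := h₁
  obtain ⟨hc₂, ⟨M₂, hM₂⟩, h0₂, hd₂, hdd₂⟩ := h₂
  have hdd : ∀ t > (0:ℝ), HasDerivAt (deriv (Φ₁ - Φ₂)) (A t * (Φ₁ - Φ₂) t) t := by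
    intro t ht
    have heq : deriv (Φ₁ - Φ₂) =ᶠ[nhds t] deriv Φ₁ - deriv Φ₂ := by
      filter_upwards [Ioi_mem_nhds ht] with x hx
      exact deriv_sub (hd₁ x hx) (hd₂ x hx)
    simpa only [Pi.sub_apply, mul_sub] using
      ((hdd₁ t ht).sub (hdd₂ t ht)).congr_of_eventuallyEq heq
  intro t ht
  have := nonpos_of_hasDerivAt_deriv_of_bounded hA (hc₁.sub hc₂)
    (fun t ht => (abs_sub _ _).trans (add_le_add (hM₁ t ht) (hM₂ t ht)))
    (by simp [h0₁, h0₂]) (fun t ht => (hd₁ t ht).sub (hd₂ t ht)) hdd t ht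
  simpa [sub_nonpos] using this

theorem IsSL.eqOn (hA : ∀ t > (0:ℝ), 0 ≤ A t) (h₁ : IsSL A Φ₁) (h₂ : IsSL A Φ₂) :
    EqOn Φ₁ Φ₂ (Ici 0) := fun t ht =>
  (h₁.le hA h₂ t ht).antisymm (h₂.le hA h₁ t ht)

theorem IsSL.comp_const_mul {B : ℝ → ℝ} {μ : ℝ} (hΦ : IsSL A Φ) (hμ : 0 < μ)
    (hB : ∀ t > (0:ℝ), B t = μ ^ 2 * A (μ * t)) : IsSL B (fun t => Φ (μ * t)) := by
  obtain ⟨hc, ⟨M, hM⟩, h0, hd, hdd⟩ := hΦ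
  have hμt : ∀ t > (0:ℝ), 0 < μ * t := fun t ht => mul_pos hμ ht
  have hderiv : deriv (fun t => Φ (μ * t)) = fun t => μ * deriv Φ (μ * t) :=
    funext (deriv_comp_mul_left μ Φ)
  refine ⟨hc.comp (continuousOn_const.mul continuousOn_id) fun t ht => mul_nonneg hμ.le ht,
    ⟨M, fun t ht => hM _ (mul_nonneg hμ.le ht)⟩, by simpa using h0,
    fun t ht => (hd _ (hμt t ht)).comp t (differentiableAt_id.const_mul μ), fun t ht => ?_⟩
  rw [hderiv]
  refine (((hdd _ (hμt t ht)).comp t (hasDerivAt_const_mul μ)).const_mul μ).congr_deriv ?_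
  rw [hB t ht]
  ring

end

theorem slHyp_const_mul_rpow {c β : ℝ} (hc : 0 < c) (hβ : -1 < β) :
    SLHyp (fun t => c * t ^ β) := by
  have hnonneg : ∀ t ∈ Ici (1:ℝ), 0 ≤ c * t ^ β := fun t ht =>
    mul_nonneg hc.le (Real.rpow_nonneg (zero_le_one.trans ht) β)
  refine ⟨continuousOn_const.mul (continuousOn_id.rpow_const fun t ht => Or.inl (ne_of_gt ht)),
    fun t ht => mul_pos hc (Real.rpow_pos_of_pos ht β),
    ((intervalIntegral.intervalIntegrable_rpow' hβ).1).const_mul c, ?_⟩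
  by_contra hfin
  have hint' : IntegrableOn (fun t => c * t ^ β) (Ici 1) :=
    (lintegral_ofReal_ne_top_iff_integrable (by fun_prop)
      ((ae_restrict_iff' measurableSet_Ici).2 (ae_of_all _ hnonneg))).1 hfin
  have hint : IntegrableOn (fun t : ℝ => t ^ β) (Ioi 1) := by
    simpa [IntegrableOn, inv_mul_cancel_left₀ hc.ne'] using
      (hint'.mono_set Ioi_subset_Ici_self).const_mul c⁻¹
  linarith [(integrableOn_Ioi_rpow_iff one_pos).1 hint]

theorem scaling_of_power_coefficient_solution (c β : ℝ) (hc : 0 < c) (hβ : -1 < β)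
    (lam : ℝ) (hlam : 0 < lam) (Φ₀ Φlam : ℝ → ℝ)
    (h0 : IsSL (fun t => c * t ^ β) Φ₀)
    (hl : IsSL (fun t => lam * (c * t ^ β)) Φlam) :
    SLHyp (fun t => c * t ^ β) ∧
    ∀ t ≥ (0:ℝ), Φlam t = Φ₀ (lam ^ (1 / (β + 2)) * t) := by
  have hSL := slHyp_const_mul_rpow hc hβ
  refine ⟨hSL, ?_⟩
  set μ := lam ^ (1 / (β + 2))
  have hμ : 0 < μ := Real.rpow_pos_of_pos hlam _
  have hμpow : μ ^ (2:ℝ) * μ ^ β = lam := by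
    rw [← Real.rpow_add hμ, ← Real.rpow_mul hlam.le, add_comm,
      one_div_mul_cancel (by linarith), Real.rpow_one]
  have hscaled : IsSL (fun t => lam * (c * t ^ β)) (fun t => Φ₀ (μ * t)) :=
    h0.comp_const_mul hμ fun t ht => by
      rw [Real.mul_rpow hμ.le ht.le, ← hμpow, ← Real.rpow_natCast]
      push_cast
      ring
  exact hl.eqOn (fun t ht => (mul_pos hlam (hSL.2.1 t ht)).le) hscaled
end

section
/- In the setting of the family (A_λ), there exist λ₀ > 0 and K' > 0 such that for all λ ∈ (0, λ₀] and all t ≥ 0 one has |Φ_{A_λ}'(t)| ≤ K'. -/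
/-! For every solution of `Φ'' = A Φ` with `A ≥ 0`, the product `Φ Φ'` is nondecreasing, and it
is nonpositive because `Φ` is bounded; hence `|Φ| ≤ 1` and `Φ'²` is nonincreasing. The mean
value theorem gives a point of `(1,2)` where `|Φ'| ≤ 2`, and on `(0,2]` the equation bounds the
variation of `Φ'` by `∫₀² A`. For `λ ≤ 1` the growth hypotheses on `p` give
`A_λ(s) ≤ C (s^β + 1)` uniformly in `λ`, which is integrable near `0` since `β > -1`. -/

open MeasureTheory Filter Set

theorem abs_derivWithin_Ici_le_of_abs_deriv_le {f f' : ℝ → ℝ} {a K : ℝ}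
    (hf : ContinuousOn f (Ici a)) (hf' : ∀ t > a, HasDerivAt f (f' t) t)
    (hK : ∀ t > a, |f' t| ≤ K) {t : ℝ} (ht : a ≤ t) : |derivWithin f (Ici a) t| ≤ K := by
  rcases ht.lt_or_eq with ht | rfl
  · rw [derivWithin_of_mem_nhds (Ici_mem_nhds ht), (hf' t ht).deriv]
    exact hK t ht
  by_cases hdiff : DifferentiableWithinAt ℝ f (Ici a) a
  · have hslope := hdiff.hasDerivWithinAt
    rw [hasDerivWithinAt_iff_tendsto_slope, Ici_sdiff_left] at hslope
    refine le_of_tendsto hslope.abs (eventually_nhdsWithin_of_forall fun x (hx : a < x) => ?_)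
    obtain ⟨ζ, hζ, hfζ⟩ := exists_hasDerivAt_eq_slope f f' hx (hf.mono Icc_subset_Ici_self)
      fun y hy => hf' y hy.1
    rw [slope_def_field, ← hfζ]
    exact hK ζ hζ.1
  · rw [derivWithin_zero_of_not_differentiableWithinAt hdiff, abs_zero]
    exact (abs_nonneg _).trans (hK (a + 1) (lt_add_one a))

namespace IsSL

variable {A Φ : ℝ → ℝ}

theorem hasDerivAt (hΦ : IsSL A Φ) {t : ℝ} (ht : 0 < t) : HasDerivAt Φ (deriv Φ t) t :=
  (hΦ.2.2.2.1 t ht).hasDerivAt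

theorem hasDerivAt_deriv (hΦ : IsSL A Φ) {t : ℝ} (ht : 0 < t) :
    HasDerivAt (deriv Φ) (A t * Φ t) t :=
  hΦ.2.2.2.2 t ht

theorem continuousOn_deriv (hΦ : IsSL A Φ) : ContinuousOn (deriv Φ) (Ioi 0) :=
  fun _ ht => (hΦ.hasDerivAt_deriv ht).continuousAt.continuousWithinAt

theorem monotoneOn_mul_deriv (hΦ : IsSL A Φ) (hA : ∀ t > 0, 0 ≤ A t) :
    MonotoneOn (fun t => Φ t * deriv Φ t) (Ioi 0) := by
  refine monotoneOn_of_hasDerivWithinAt_nonneg (convex_Ioi 0)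
    (f' := fun t => deriv Φ t * deriv Φ t + Φ t * (A t * Φ t))
    ((hΦ.1.mono Ioi_subset_Ici_self).mul hΦ.continuousOn_deriv) (fun t ht => ?_) fun t ht => ?_
  · rw [interior_Ioi] at ht ⊢
    exact ((hΦ.hasDerivAt ht).mul (hΦ.hasDerivAt_deriv ht)).hasDerivWithinAt
  · rw [interior_Ioi] at ht
    nlinarith [mul_self_nonneg (deriv Φ t), mul_nonneg (hA t ht) (mul_self_nonneg (Φ t))]

/-- If `Φ Φ'` were positive somewhere, it would stay above that value, so `Φ²` would grow at
least linearly, contradicting the boundedness of `Φ`. -/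
theorem mul_deriv_nonpos_s16 (hΦ : IsSL A Φ) (hA : ∀ t > 0, 0 ≤ A t) {t₀ : ℝ} (ht₀ : 0 < t₀) :
    Φ t₀ * deriv Φ t₀ ≤ 0 := by
  obtain ⟨M, hM⟩ := hΦ.2.1
  have hM1 : 1 ≤ M := by simpa [hΦ.2.2.1] using hM 0 le_rfl
  by_contra! hε
  set ε := Φ t₀ * deriv Φ t₀
  have hmono : MonotoneOn (fun t => Φ t * Φ t - 2 * ε * t) (Ici t₀) := by
    have hcont : ContinuousOn Φ (Ici t₀) := hΦ.1.mono (Ici_subset_Ici.2 ht₀.le)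
    refine monotoneOn_of_hasDerivWithinAt_nonneg (convex_Ici t₀)
      (f' := fun t => deriv Φ t * Φ t + Φ t * deriv Φ t - 2 * ε * 1)
      ((hcont.mul hcont).sub (by fun_prop)) (fun t ht => ?_) fun t ht => ?_
    · rw [interior_Ici] at ht ⊢
      have h := hΦ.hasDerivAt (ht₀.trans ht)
      exact ((h.mul h).sub ((hasDerivAt_id t).const_mul (2 * ε))).hasDerivWithinAt
    · rw [interior_Ici] at ht
      have := hΦ.monotoneOn_mul_deriv hA ht₀ (ht₀.trans ht) ht.le
      simp only at this
      nlinarith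
  set x := t₀ + M ^ 2 / ε
  have hx : t₀ ≤ x := le_add_of_nonneg_right (by positivity)
  have hgrowth := hmono self_mem_Ici hx hx
  have hΦx : Φ x * Φ x ≤ M ^ 2 := by
    rw [← abs_mul_abs_self, sq]
    exact mul_self_le_mul_self (abs_nonneg _) (hM x (ht₀.le.trans hx))
  have hεx : 2 * ε * x = 2 * ε * t₀ + 2 * M ^ 2 := by
    simp only [x]; field_simp
  simp only at hgrowth
  nlinarith [mul_self_nonneg (Φ t₀)]

theorem abs_le_one (hΦ : IsSL A Φ) (hA : ∀ t > 0, 0 ≤ A t) {t : ℝ} (ht : 0 ≤ t) :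
    |Φ t| ≤ 1 := by
  have hanti : AntitoneOn (fun t => Φ t * Φ t) (Ici 0) := by
    refine antitoneOn_of_hasDerivWithinAt_nonpos (convex_Ici 0) (hΦ.1.mul hΦ.1)
      (f' := fun t => deriv Φ t * Φ t + Φ t * deriv Φ t)
      (fun t ht => ?_) fun t ht => ?_
    · rw [interior_Ici] at ht ⊢
      exact ((hΦ.hasDerivAt ht).mul (hΦ.hasDerivAt ht)).hasDerivWithinAt
    · rw [interior_Ici] at ht
      nlinarith [hΦ.mul_deriv_nonpos_s16 hA ht]
  have := hanti self_mem_Ici ht ht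
  simp only [hΦ.2.2.1, mul_one] at this
  exact abs_le_one_iff_mul_self_le_one.2 this

theorem antitoneOn_deriv_mul_deriv (hΦ : IsSL A Φ) (hA : ∀ t > 0, 0 ≤ A t) :
    AntitoneOn (fun t => deriv Φ t * deriv Φ t) (Ioi 0) := by
  refine antitoneOn_of_hasDerivWithinAt_nonpos (convex_Ioi 0)
    (f' := fun t => A t * Φ t * deriv Φ t + deriv Φ t * (A t * Φ t))
    (hΦ.continuousOn_deriv.mul hΦ.continuousOn_deriv) (fun t ht => ?_) fun t ht => ?_
  · rw [interior_Ioi] at ht ⊢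
    exact ((hΦ.hasDerivAt_deriv ht).mul (hΦ.hasDerivAt_deriv ht)).hasDerivWithinAt
  · rw [interior_Ioi] at ht
    nlinarith [mul_nonpos_of_nonneg_of_nonpos (hA t ht) (hΦ.mul_deriv_nonpos_s16 hA ht)]

theorem exists_mem_Ioo_abs_deriv_le_two (hΦ : IsSL A Φ) (hA : ∀ t > 0, 0 ≤ A t) :
    ∃ ξ ∈ Ioo (1 : ℝ) 2, |deriv Φ ξ| ≤ 2 := by
  obtain ⟨ξ, hξ, hslope⟩ := exists_hasDerivAt_eq_slope Φ (deriv Φ) one_lt_two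
    (hΦ.1.mono fun x hx => zero_le_one.trans hx.1) fun x hx => hΦ.hasDerivAt (one_pos.trans hx.1)
  refine ⟨ξ, hξ, ?_⟩
  rw [hslope, show (2 : ℝ) - 1 = 1 by norm_num, div_one]
  calc |Φ 2 - Φ 1| ≤ |Φ 2| + |Φ 1| := abs_sub _ _
    _ ≤ 2 := by linarith [hΦ.abs_le_one hA zero_le_two, hΦ.abs_le_one hA zero_le_one]

-- `|Φ'(b) - Φ'(a)| ≤ ∫ₐᵇ A |Φ|` and `|Φ| ≤ 1`.
theorem abs_deriv_sub_le_integral (hΦ : IsSL A Φ) (hA : ∀ t > 0, 0 ≤ A t) {D : ℝ → ℝ}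
    {a b : ℝ} (ha : 0 < a) (hab : a ≤ b) (hD : IntegrableOn D (Icc a b))
    (hAD : ∀ s ∈ Ioo a b, A s ≤ D s) :
    |deriv Φ b - deriv Φ a| ≤ ∫ s in a..b, D s := by
  have hpos : ∀ s ∈ Icc a b, 0 < s := fun s hs => ha.trans_le hs.1
  have hcont : ContinuousOn (deriv Φ) (Icc a b) := hΦ.continuousOn_deriv.mono hpos
  have hderiv : ∀ s ∈ Ioo a b, HasDerivAt (deriv Φ) (A s * Φ s) s :=
    fun s hs => hΦ.hasDerivAt_deriv (hpos s (Ioo_subset_Icc_self hs))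
  have hbound : ∀ s ∈ Ioo a b, |A s * Φ s| ≤ D s := fun s hs => by
    have hs0 := hpos s (Ioo_subset_Icc_self hs)
    rw [abs_mul, abs_of_nonneg (hA s hs0)]
    exact (mul_le_of_le_one_right (hA s hs0) (hΦ.abs_le_one hA hs0.le)).trans (hAD s hs)
  rw [abs_le]
  constructor
  · have := intervalIntegral.sub_le_integral_of_hasDeriv_right_of_le hab hcont.neg
      (fun s hs => (hderiv s hs).neg.hasDerivWithinAt) hD
      fun s hs => (neg_le_abs _).trans (hbound s hs)
    rw [Pi.neg_apply, Pi.neg_apply] at this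
    linarith
  · exact intervalIntegral.sub_le_integral_of_hasDeriv_right_of_le hab hcont
      (fun s hs => (hderiv s hs).hasDerivWithinAt) hD
      fun s hs => (le_abs_self _).trans (hbound s hs)

theorem abs_deriv_le (hΦ : IsSL A Φ) (hA : ∀ t > 0, 0 ≤ A t) {D : ℝ → ℝ}
    (hD : IntervalIntegrable D volume 0 2) (hAD : ∀ s ∈ Ioc 0 2, A s ≤ D s) {t : ℝ}
    (ht : 0 < t) : |deriv Φ t| ≤ 2 + ∫ s in (0 : ℝ)..2, D s := by
  have hD0 : 0 ≤ᵐ[volume.restrict (Ioc 0 2)] D :=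
    ae_restrict_of_forall_mem measurableSet_Ioc fun s hs => (hA s hs.1).trans (hAD s hs)
  obtain ⟨ξ, hξ, hξ2⟩ := hΦ.exists_mem_Ioo_abs_deriv_le_two hA
  rcases le_or_gt ξ t with hξt | htξ
  · have hsq := hΦ.antitoneOn_deriv_mul_deriv hA (one_pos.trans hξ.1) ht hξt
    simp only [← abs_mul_abs_self (deriv Φ _)] at hsq
    have hI : 0 ≤ ∫ s in (0 : ℝ)..2, D s := by
      simpa using intervalIntegral.integral_mono_interval le_rfl le_rfl zero_le_two hD0 hD
    nlinarith [abs_nonneg (deriv Φ t), abs_nonneg (deriv Φ ξ)]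
  · have hsub : uIcc t ξ ⊆ uIcc 0 2 := by
      rw [uIcc_of_le htξ.le, uIcc_of_le zero_le_two]; exact Icc_subset_Icc ht.le hξ.2.le
    have hjump := hΦ.abs_deriv_sub_le_integral hA ht htξ.le
      ((intervalIntegrable_iff_integrableOn_Icc_of_le htξ.le).1 (hD.mono_set hsub))
      fun s hs => hAD s ⟨ht.trans hs.1, hs.2.le.trans hξ.2.le⟩
    calc |deriv Φ t| = |deriv Φ ξ - (deriv Φ ξ - deriv Φ t)| := by rw [sub_sub_cancel]
      _ ≤ |deriv Φ ξ| + |deriv Φ ξ - deriv Φ t| := abs_sub _ _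
      _ ≤ 2 + ∫ s in t..ξ, D s := add_le_add hξ2 hjump
      _ ≤ 2 + ∫ s in (0 : ℝ)..2, D s := by
        gcongr
        exact intervalIntegral.integral_mono_interval ht.le htξ.le hξ.2.le hD0 hD

end IsSL

theorem rpow_mul_scaled_le_of_le_one {β C α lam s : ℝ} {p : ℝ → ℝ} (hC : 0 ≤ C)
    (hpbd₁ : β ≤ 0 → ∀ u > (0:ℝ), p u ≤ C)
    (hpbd₂ : 0 < β → ∀ u > (0:ℝ), p u ≤ C * (1 + u ^ (-β)))
    (hα : 0 ≤ α) (hlam : 0 < lam) (hlam1 : lam ≤ 1) (hs : 0 < s) :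
    s ^ β * p (s * lam ^ (-α)) ≤ C * s ^ β + C := by
  have hscale : 0 < lam ^ (-α) := Real.rpow_pos_of_pos hlam _
  have hu : 0 < s * lam ^ (-α) := mul_pos hs hscale
  have hsβ : 0 ≤ s ^ β := Real.rpow_nonneg hs.le β
  rcases le_or_gt β 0 with hβ | hβ
  · nlinarith [mul_le_mul_of_nonneg_left (hpbd₁ hβ _ hu) hsβ]
  · have hcancel : s ^ β * (s * lam ^ (-α)) ^ (-β) = lam ^ (α * β) := by
      rw [Real.mul_rpow hs.le hscale.le, ← mul_assoc, ← Real.rpow_add hs, add_neg_cancel,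
        Real.rpow_zero, one_mul, ← Real.rpow_mul hlam.le, neg_mul_neg]
    have hlamαβ : lam ^ (α * β) ≤ 1 := Real.rpow_le_one hlam.le hlam1 (by positivity)
    calc s ^ β * p (s * lam ^ (-α))
        ≤ s ^ β * (C * (1 + (s * lam ^ (-α)) ^ (-β))) :=
          mul_le_mul_of_nonneg_left (hpbd₂ hβ _ hu) hsβ
      _ = C * s ^ β + C * lam ^ (α * β) := by rw [← hcancel]; ring
      _ ≤ C * s ^ β + C := by gcongr; exact mul_le_of_le_one_right hC hlamαβ

theorem uniform_bound_on_derivative_of_phi_lambda_general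
    (β C : ℝ) (hβ : -1 < β) (hC : 0 < C)
    (p : ℝ → ℝ) (hppos : ∀ u > (0:ℝ), 0 < p u)
    (hpbd₁ : β ≤ 0 → ∀ u > (0:ℝ), p u ≤ C)
    (hpbd₂ : 0 < β → ∀ u > (0:ℝ), p u ≤ C * (1 + u ^ (-β))) :
    ∃ lam₀ > (0:ℝ), ∃ K' > (0:ℝ), ∀ lam : ℝ, 0 < lam → lam ≤ lam₀ →
      ∀ Φ : ℝ → ℝ, IsSL (fun t => t ^ β * p (t * lam ^ (-(1 / (β + 2))))) Φ →
        ∀ t ≥ (0:ℝ), |derivWithin Φ (Set.Ici 0) t| ≤ K' := by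
  have hDint : IntervalIntegrable (fun s => C * s ^ β + C) volume 0 2 :=
    ((intervalIntegral.intervalIntegrable_rpow' hβ).const_mul C).add intervalIntegrable_const
  have hI : 0 ≤ ∫ s in (0 : ℝ)..2, (C * s ^ β + C) := intervalIntegral.integral_nonneg
    zero_le_two fun s hs => by have := Real.rpow_nonneg hs.1 β; positivity
  refine ⟨1, one_pos, 2 + ∫ s in (0 : ℝ)..2, (C * s ^ β + C), by positivity,
    fun lam hlam hlam1 Φ hΦ t ht => ?_⟩
  have hα : 0 ≤ 1 / (β + 2) := one_div_nonneg.2 (by linarith)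
  have hA : ∀ s > (0 : ℝ), 0 ≤ s ^ β * p (s * lam ^ (-(1 / (β + 2)))) := fun s hs =>
    (mul_pos (Real.rpow_pos_of_pos hs β) (hppos _ (mul_pos hs (Real.rpow_pos_of_pos hlam _)))).le
  exact abs_derivWithin_Ici_le_of_abs_deriv_le hΦ.1 (fun s hs => hΦ.hasDerivAt hs)
    (fun s hs => hΦ.abs_deriv_le hA hDint
      (fun u hu => rpow_mul_scaled_le_of_le_one hC.le hpbd₁ hpbd₂ hα hlam hlam1 hu.1) hs) ht

theorem uniform_bound_on_derivative_of_phi_lambda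
    (β c C : ℝ) (hβ : -1 < β) (hc : 0 < c) (hC : 0 < C)
    (p : ℝ → ℝ) (hpc : ContinuousOn p (Set.Ioi 0)) (hppos : ∀ u > (0:ℝ), 0 < p u)
    (hplim : Filter.Tendsto p Filter.atTop (nhds c))
    (hpbd₁ : β ≤ 0 → ∀ u > (0:ℝ), p u ≤ C)
    (hpbd₂ : 0 < β → ∀ u > (0:ℝ), p u ≤ C * (1 + u ^ (-β))) :
    ∃ lam₀ > (0:ℝ), ∃ K' > (0:ℝ), ∀ lam : ℝ, 0 < lam → lam ≤ lam₀ →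
      ∀ Φ : ℝ → ℝ, IsSL (fun t => t ^ β * p (t * lam ^ (-(1 / (β + 2))))) Φ →
        ∀ t ≥ (0:ℝ), |derivWithin Φ (Set.Ici 0) t| ≤ K' :=
  uniform_bound_on_derivative_of_phi_lambda_general β C hβ hC p hppos hpbd₁ hpbd₂
end
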